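/- Let a, b, c > 0 and let x, λ, μ : I → ℝ be differentiable on an open interval I with x(t) > 0, satisfying x' = −a x + (b + c x) u, λ' = a λ − 1 + u, μ' = (c μ − b λ) u for a function u : I → ℝ, and suppose the switching function σ := b λ − c μ − x vanishes identically on I. Then on all of I: (i) a b λ + a x = b, i.e. λ = (b − a x)/(a b); (ii) the singular control is u = 2 a x/(2b + c x); and (iii) x' = a c x²/(2b + c x) > 0, so x is strictly increasing on I. -/

import Mathlib

/-!
On a singular arc `σ ≡ 0`, hence also `σ' ≡ 0`. Substituting the characteristic system gives
`σ' = (a b λ + a x - b) + c u σ`, hence `φ := a b λ + a x - b` vanishes on `I`. Differentiating once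
more, `φ' = a φ + a (u (2b + c x) - 2 a x)`, which pins down the control `u = 2 a x / (2b + c x)`.
Feeding it back into the state equation gives `x' = a c x² / (2b + c x) > 0`.
-/

open Filter Topology

theorem HasDerivAt.eq_zero_of_eventuallyEq_zero {𝕜 F : Type*} [NontriviallyNormedField 𝕜]
    [NormedAddCommGroup F] [NormedSpace 𝕜 F] {f : 𝕜 → F} {f' : F} {t : 𝕜}
    (hf : HasDerivAt f f' t) (h0 : f =ᶠ[𝓝 t] 0) : f' = 0 :=
  hf.unique ((hasDerivAt_const t 0).congr_of_eventuallyEq h0)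

section Characteristics

variable {a b c : ℝ} {x lam mu u : ℝ → ℝ} {t : ℝ}

theorem hasDerivAt_switchingFunction (hx : HasDerivAt x (-a * x t + (b + c * x t) * u t) t)
    (hlam : HasDerivAt lam (a * lam t - 1 + u t) t)
    (hmu : HasDerivAt mu ((c * mu t - b * lam t) * u t) t) :
    HasDerivAt (fun s => b * lam s - c * mu s - x s)
      (a * b * lam t + a * x t - b + c * u t * (b * lam t - c * mu t - x t)) t :=
  (((hlam.const_mul b).sub (hmu.const_mul c)).sub hx).congr_deriv (by ring)

theorem hasDerivAt_singularResidual (hx : HasDerivAt x (-a * x t + (b + c * x t) * u t) t)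
    (hlam : HasDerivAt lam (a * lam t - 1 + u t) t) :
    HasDerivAt (fun s => a * b * lam s + a * x s - b)
      (a * (a * b * lam t + a * x t - b) + a * (u t * (2 * b + c * x t) - 2 * a * x t)) t :=
  (((hlam.const_mul (a * b)).add (hx.const_mul a)).sub_const b).congr_deriv (by ring)

end Characteristics

/-- On a singular arc (where `σ = b λ - c μ - x` vanishes identically on an
open interval `I` with `x > 0`): (i) `a b λ + a x = b`, i.e. `λ = (b - a x)/(a b)`;
(ii) the singular control is `u = 2 a x/(2b + c x)`; (iii) `x' = a c x²/(2b + c x) > 0`,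
so `x` is strictly increasing on `I`. -/
theorem singular_arc_cooperative (a b c : ℝ) (ha : 0 < a) (hb : 0 < b) (hc : 0 < c)
    (I : Set ℝ) (hI_open : IsOpen I) (hI_conn : I.OrdConnected)
    (x lam mu u : ℝ → ℝ)
    (hx_pos : ∀ t ∈ I, 0 < x t)
    (hx : ∀ t ∈ I, HasDerivAt x (-a * x t + (b + c * x t) * u t) t)
    (hlam : ∀ t ∈ I, HasDerivAt lam (a * lam t - 1 + u t) t)
    (hmu : ∀ t ∈ I, HasDerivAt mu ((c * mu t - b * lam t) * u t) t)
    (hsig : ∀ t ∈ I, b * lam t - c * mu t - x t = 0) :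
    (∀ t ∈ I, a * b * lam t + a * x t = b ∧ lam t = (b - a * x t) / (a * b)) ∧
    (∀ t ∈ I, u t = 2 * a * x t / (2 * b + c * x t)) ∧
    (∀ t ∈ I, HasDerivAt x (a * c * (x t) ^ 2 / (2 * b + c * x t)) t ∧
      0 < a * c * (x t) ^ 2 / (2 * b + c * x t)) ∧
    StrictMonoOn x I := by
  have hden : ∀ t ∈ I, 0 < 2 * b + c * x t := fun t ht => by
    have := hx_pos t ht; positivity
  have hresidual : ∀ t ∈ I, a * b * lam t + a * x t - b = 0 := fun t ht => by
    have h := (hasDerivAt_switchingFunction (hx t ht) (hlam t ht) (hmu t ht))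
      |>.eq_zero_of_eventuallyEq_zero (eventually_of_mem (hI_open.mem_nhds ht) hsig)
    simpa [hsig t ht] using h
  have hcontrol : ∀ t ∈ I, u t = 2 * a * x t / (2 * b + c * x t) := fun t ht => by
    have h := (hasDerivAt_singularResidual (hx t ht) (hlam t ht))
      |>.eq_zero_of_eventuallyEq_zero (eventually_of_mem (hI_open.mem_nhds ht) hresidual)
    rw [hresidual t ht, mul_zero, zero_add, mul_eq_zero, or_iff_right ha.ne', sub_eq_zero] at h
    rw [eq_div_iff (hden t ht).ne', h]
  have hstate : ∀ t ∈ I, HasDerivAt x (a * c * (x t) ^ 2 / (2 * b + c * x t)) t ∧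
      0 < a * c * (x t) ^ 2 / (2 * b + c * x t) := fun t ht => by
    have := hx_pos t ht
    refine ⟨(hx t ht).congr_deriv ?_, by positivity⟩
    rw [hcontrol t ht]
    field_simp [(hden t ht).ne']
    ring
  refine ⟨fun t ht => ⟨by linarith [hresidual t ht], ?_⟩, hcontrol, hstate, ?_⟩
  · rw [eq_div_iff (by positivity)]
    linarith [hresidual t ht]
  · exact strictMonoOn_of_hasDerivWithinAt_pos (convex_iff_ordConnected.mpr hI_conn)
      (fun t ht => (hx t ht).continuousAt.continuousWithinAt)
      (fun t ht => (hstate t (interior_subset ht)).1.hasDerivWithinAt)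
      (fun t ht => (hstate t (interior_subset ht)).2)
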